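/- A map f : X → Y over Z in simplicial spaces is a homotopy equivalence over Z if and only if for every map K → Z, the induced map π₀(Map_Z(K, X)) → π₀(Map_Z(K, Y)) is a bijection. -/

import Mathlib

set_option linter.unnecessarySimpa false

open CategoryTheory CategoryTheory.Limits MonoidalCategory Simplicial SSet

namespace KQ

/-- Simplicial spaces (bisimplicial sets): presheaves on `Δ × Δ`.
The first coordinate is the "categorical" (simplicial) direction, the second
the "space" direction. -/
abbrev sSp := (SimplexCategory × SimplexCategory)ᵒᵖ ⥤ Type

noncomputable example : MonoidalClosed sSp := inferInstance

/-- The `n`-th space `X_n` of a simplicial space. -/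
@[simps]
def lvl (X : sSp) (n : SimplexCategory) : SSet where
  obj m := X.obj (Opposite.op (n, m.unop))
  map {m m'} f := X.map (Quiver.Hom.op ((𝟙 n, f.unop) : (n, m'.unop) ⟶ (n, m.unop)))
  map_id m := by
    show X.map (Quiver.Hom.op ((𝟙 n, (𝟙 m).unop) : (n, m.unop) ⟶ (n, m.unop))) = 𝟙 _
    have : ((𝟙 n, (𝟙 m).unop) : (n, m.unop) ⟶ (n, m.unop)) = 𝟙 (n, m.unop) := rfl
    rw [this]; exact X.map_id _
  map_comp {m m' m''} f g := by
    show X.map _ = X.map _ ≫ X.map _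
    rw [← X.map_comp, ← op_comp]
    congr 1

/-- Functoriality of the spaces `X_n` in the simplicial direction. -/
@[simps]
def lmap (X : sSp) {n n' : SimplexCategory} (a : n ⟶ n') : lvl X n' ⟶ lvl X n where
  app m := X.map (Quiver.Hom.op ((a, 𝟙 m.unop) : (n, m.unop) ⟶ (n', m.unop)))
  naturality {m m'} f := by
    show X.map _ ≫ X.map _ = X.map _ ≫ X.map _
    rw [← X.map_comp, ← X.map_comp, ← op_comp, ← op_comp]
    congr 2

/-- The map of spaces `X_n ⟶ Y_n` induced by a map of simplicial spaces. -/
@[simps]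
def lvlMap {X Y : sSp} (f : X ⟶ Y) (n : SimplexCategory) : lvl X n ⟶ lvl Y n where
  app _ := f.app _
  naturality _ _ _ := f.naturality _


/-- A map of simplicial sets is a Kan fibration: RLP w.r.t. horn inclusions. -/
def KanFib {X Y : SSet} (f : X ⟶ Y) : Prop :=
  ∀ (n : ℕ) (i : Fin (n + 2)), HasLiftingProperty (SSet.horn (n + 1) i).ι f

/-- Trivial fibration of simplicial sets: RLP w.r.t. boundary inclusions. -/
def TrivFib {X Y : SSet} (f : X ⟶ Y) : Prop :=
  ∀ (n : ℕ), HasLiftingProperty (SSet.boundary n).ι f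

/-- Anodyne maps (trivial cofibrations of the Kan–Quillen model structure). -/
def Anodyne {A B : SSet} (i : A ⟶ B) : Prop :=
  ∀ ⦃X Y : SSet⦄ (p : X ⟶ Y), KanFib p → HasLiftingProperty i p

/-- Weak homotopy equivalences of simplicial sets: maps factoring as an anodyne
map followed by a trivial fibration. -/
def WeakEquiv {X Y : SSet} (f : X ⟶ Y) : Prop :=
  ∃ (Z : SSet) (i : X ⟶ Z) (p : Z ⟶ Y), Anodyne i ∧ TrivFib p ∧ i ≫ p = f

/-- Weak equivalences of simplicial spaces (Reedy = levelwise). -/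
def sWE {X Y : sSp} (f : X ⟶ Y) : Prop :=
  ∀ n : SimplexCategory, WeakEquiv (lvlMap f n)

/-- Cofibrations of simplicial spaces: levelwise monomorphisms. -/
def sCof {X Y : sSp} (f : X ⟶ Y) : Prop :=
  ∀ n : SimplexCategory, Mono (lvlMap f n)

/-- Reedy fibrations of simplicial spaces, characterized by the right lifting
property against all trivial cofibrations. -/
def sFib {X Y : sSp} (f : X ⟶ Y) : Prop :=
  ∀ ⦃A B : sSp⦄ (i : A ⟶ B), sCof i → sWE i → HasLiftingProperty i f

/-- Reedy trivial fibrations: RLP against all cofibrations. -/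
def sTrivFib {X Y : sSp} (f : X ⟶ Y) : Prop :=
  ∀ ⦃A B : sSp⦄ (i : A ⟶ B), sCof i → HasLiftingProperty i f

/-- The discrete simplicial space `F[n]` (the "categorical" `n`-simplex). -/
@[simps]
def F (n : ℕ) : sSp where
  obj p := p.unop.1 ⟶ ⦋n⦌
  map f := TypeCat.ofHom fun g => f.unop.1 ≫ g

/-- The "space-direction" simplex `Δ[m]` viewed as a simplicial space
(constant in the first variable). -/
@[simps]
def D (m : ℕ) : sSp where
  obj p := p.unop.2 ⟶ ⦋m⦌
  map f := TypeCat.ofHom fun g => f.unop.2 ≫ g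

instance homToZeroSubsingleton (a : SimplexCategory) :
    Subsingleton (a ⟶ (⦋0⦌ : SimplexCategory)) :=
  ⟨fun f g => by
    apply SimplexCategory.Hom.ext'
    apply OrderHom.ext
    funext x
    apply Fin.ext
    have h1 : ((f.toOrderHom x : Fin (⦋0⦌.len + 1)) : ℕ) < 0 + 1 := by
      simpa using (f.toOrderHom x).isLt
    have h2 : ((g.toOrderHom x : Fin (⦋0⦌.len + 1)) : ℕ) < 0 + 1 := by
      simpa using (g.toOrderHom x).isLt
    omega⟩

instance (p : (SimplexCategory × SimplexCategory)ᵒᵖ) : Subsingleton ((F 0).obj p) :=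
  inferInstanceAs (Subsingleton (p.unop.1 ⟶ ⦋0⦌))

instance (p : (SimplexCategory × SimplexCategory)ᵒᵖ) : Subsingleton ((D 0).obj p) :=
  inferInstanceAs (Subsingleton (p.unop.2 ⟶ ⦋0⦌))

/-- `F[0]` is a terminal simplicial space. -/
noncomputable def FZeroIsTerminal : IsTerminal (F 0) :=
  IsTerminal.ofUniqueHom
    (fun X => { app := fun p => TypeCat.ofHom fun _ => SimplexCategory.const p.unop.1 ⦋0⦌ 0
                naturality := fun _ _ _ => by ext; apply Subsingleton.elim })
    (fun X m => by
      apply NatTrans.ext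
      funext p
      ext x
      apply Subsingleton.elim)

/-- `D[0]` is a terminal simplicial space. -/
noncomputable def DZeroIsTerminal : IsTerminal (D 0) :=
  IsTerminal.ofUniqueHom
    (fun X => { app := fun p => TypeCat.ofHom fun _ => SimplexCategory.const p.unop.2 ⦋0⦌ 0
                naturality := fun _ _ _ => by ext; apply Subsingleton.elim })
    (fun X m => by
      apply NatTrans.ext
      funext p
      ext x
      apply Subsingleton.elim)

/-- Endpoint maps `D[0] ⟶ D[1]` (`i = 0, 1`). -/
def dVtx (i : Fin 2) : D 0 ⟶ D 1 where
  app p := TypeCat.ofHom fun g => g ≫ SimplexCategory.δ i.rev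
  naturality _ _ _ := by ext; exact Category.assoc _ _ _

/-- Endpoint inclusions `X ⟶ X ⊗ D[1]` of the cylinder on a simplicial space. -/
noncomputable def cylIncl (i : Fin 2) (X : sSp) : X ⟶ X ⊗ D 1 :=
  CartesianMonoidalCategory.lift (𝟙 X) (DZeroIsTerminal.from X ≫ dVtx i)

/-- Maps `K ⟶ X` over `Z`. -/
def HomOver {K X Z : sSp} (pK : K ⟶ Z) (pX : X ⟶ Z) : Type :=
  { u : K ⟶ X // u ≫ pX = pK }

/-- Two maps over `Z` are (elementarily) homotopic over `Z` if they are joined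
by a fiberwise homotopy with cylinder `K ⊗ D[1]`; i.e., they are joined by an
edge in the mapping space `Map_Z(K, X)`. -/
def HtpyOver {K X Z : sSp} (pK : K ⟶ Z) (pX : X ⟶ Z)
    (u v : HomOver pK pX) : Prop :=
  ∃ h : K ⊗ D 1 ⟶ X,
    h ≫ pX = SemiCartesianMonoidalCategory.fst K (D 1) ≫ pK ∧
    cylIncl 0 K ≫ h = u.1 ∧ cylIncl 1 K ≫ h = v.1

/-- `π₀` of the mapping space `Map_Z(K, X)`: maps over `Z` up to homotopy
over `Z` (`Quot` takes the equivalence closure of the edge relation, which is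
exactly the set of connected components). -/
def pi0MapOver {K X Z : sSp} (pK : K ⟶ Z) (pX : X ⟶ Z) : Type :=
  Quot (HtpyOver pK pX)

/-- `f : X ⟶ Y` over `Z` is a homotopy equivalence over `Z`. -/
noncomputable def HtpyEquivOver {X Y Z : sSp} (pX : X ⟶ Z) (pY : Y ⟶ Z)
    (f : X ⟶ Y) (hf : f ≫ pY = pX) : Prop :=
  ∃ (g : Y ⟶ X) (hg : g ≫ pX = pY),
    Quot.mk (HtpyOver pX pX) ⟨f ≫ g, by rw [Category.assoc, hg, hf]⟩ =
      Quot.mk (HtpyOver pX pX) ⟨𝟙 X, by simp⟩ ∧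
    Quot.mk (HtpyOver pY pY) ⟨g ≫ f, by rw [Category.assoc, hf, hg]⟩ =
      Quot.mk (HtpyOver pY pY) ⟨𝟙 Y, by simp⟩


/-- The map `π₀ Map_Z(K, X) → π₀ Map_Z(K, Y)` induced by `f : X ⟶ Y` over `Z`. -/
noncomputable def pi0CompMap {K X Y Z : sSp} (pK : K ⟶ Z) (pX : X ⟶ Z)
    (pY : Y ⟶ Z) (f : X ⟶ Y) (hf : f ≫ pY = pX) :
    pi0MapOver pK pX → pi0MapOver pK pY :=
  Quot.map
    (fun u => ⟨u.1 ≫ f, by rw [Category.assoc, hf, u.2]⟩)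
    (fun u v hr => by
      obtain ⟨h, h0, h1, h2⟩ := hr
      exact ⟨h ≫ f,
        by rw [Category.assoc, hf, h0],
        by rw [← Category.assoc, h1],
        by rw [← Category.assoc, h2]⟩)

/-! Maps over `Z` modulo homotopy over `Z` form a category `HoOver Z`, since fiberwise
homotopies can be whiskered on either side. A map over `Z` is a homotopy equivalence over `Z`
exactly when its class is an isomorphism in `HoOver Z`, and `pi0CompMap` is postcomposition
with that class, so the theorem is the Yoneda criterion for isomorphisms. -/

lemma cylIncl_comp_whiskerRight {K X : sSp} (u : K ⟶ X) (i : Fin 2) :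
    cylIncl i K ≫ u ▷ D 1 = u ≫ cylIncl i X := by
  apply CartesianMonoidalCategory.hom_ext
  · simp [cylIncl]
  · simp only [cylIncl, Category.assoc, CartesianMonoidalCategory.lift_snd,
      CartesianMonoidalCategory.lift_whiskerRight]
    rw [← Category.assoc, DZeroIsTerminal.hom_ext (u ≫ DZeroIsTerminal.from X)]

section HomOver

variable {K X W Z : sSp} {pK : K ⟶ Z} {pX : X ⟶ Z} {pW : W ⟶ Z}

def HomOver.id (pX : X ⟶ Z) : HomOver pX pX :=
  ⟨𝟙 X, Category.id_comp pX⟩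

def HomOver.comp (u : HomOver pK pX) (v : HomOver pX pW) : HomOver pK pW :=
  ⟨u.1 ≫ v.1, by rw [Category.assoc, v.2, u.2]⟩

lemma HomOver.id_comp (u : HomOver pK pX) : (HomOver.id pK).comp u = u :=
  Subtype.ext (Category.id_comp u.1)

lemma HomOver.comp_id (u : HomOver pK pX) : u.comp (HomOver.id pX) = u :=
  Subtype.ext (Category.comp_id u.1)

lemma HomOver.comp_assoc {V : sSp} {pV : V ⟶ Z} (u : HomOver pK pX) (v : HomOver pX pW)
    (w : HomOver pW pV) : (u.comp v).comp w = u.comp (v.comp w) :=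
  Subtype.ext (Category.assoc u.1 v.1 w.1)

lemma HtpyOver.whiskerLeft (u : HomOver pK pX) {v w : HomOver pX pW}
    (h : HtpyOver pX pW v w) : HtpyOver pK pW (u.comp v) (u.comp w) := by
  obtain ⟨h, h_over, h_zero, h_one⟩ := h
  refine ⟨u.1 ▷ D 1 ≫ h, ?_, ?_, ?_⟩
  · simp [h_over, u.2]
  · rw [← Category.assoc, cylIncl_comp_whiskerRight, Category.assoc, h_zero]; rfl
  · rw [← Category.assoc, cylIncl_comp_whiskerRight, Category.assoc, h_one]; rfl

lemma HtpyOver.whiskerRight {u u' : HomOver pK pX} (h : HtpyOver pK pX u u')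
    (v : HomOver pX pW) : HtpyOver pK pW (u.comp v) (u'.comp v) := by
  obtain ⟨h, h_over, h_zero, h_one⟩ := h
  refine ⟨h ≫ v.1, ?_, ?_, ?_⟩
  · rw [Category.assoc, v.2, h_over]
  · rw [← Category.assoc, h_zero]; rfl
  · rw [← Category.assoc, h_one]; rfl

end HomOver

structure HoOver (Z : sSp) where
  dom : sSp
  hom : dom ⟶ Z

instance (Z : sSp) : Category (HoOver Z) where
  Hom A B := pi0MapOver A.hom B.hom
  id A := Quot.mk _ (HomOver.id A.hom)
  comp := Quot.map₂ HomOver.comp (fun u _ _ h => h.whiskerLeft u)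
    (fun _ _ v h => h.whiskerRight v)
  id_comp := by rintro _ _ ⟨u⟩; exact congrArg (Quot.mk _) u.id_comp
  comp_id := by rintro _ _ ⟨u⟩; exact congrArg (Quot.mk _) u.comp_id
  assoc := by rintro _ _ _ _ ⟨u⟩ ⟨v⟩ ⟨w⟩; exact congrArg (Quot.mk _) (u.comp_assoc v w)

def HoOver.homMk {Z : sSp} {A B : HoOver Z} (u : HomOver A.hom B.hom) : A ⟶ B :=
  Quot.mk _ u

lemma htpyEquivOver_iff_isIso {X Y Z : sSp} (pX : X ⟶ Z) (pY : Y ⟶ Z) (f : X ⟶ Y)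
    (hf : f ≫ pY = pX) :
    HtpyEquivOver pX pY f hf ↔
      IsIso (HoOver.homMk ⟨f, hf⟩ : HoOver.mk X pX ⟶ HoOver.mk Y pY) := by
  constructor
  · rintro ⟨g, hg, hfg, hgf⟩
    exact ⟨HoOver.homMk ⟨g, hg⟩, hfg, hgf⟩
  · rintro ⟨⟨⟨g, hg⟩⟩, hfg, hgf⟩
    exact ⟨g, hg, hfg, hgf⟩

lemma pi0CompMap_eq_comp {K X Y Z : sSp} (pK : K ⟶ Z) (pX : X ⟶ Z) (pY : Y ⟶ Z) (f : X ⟶ Y)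
    (hf : f ≫ pY = pX) :
    pi0CompMap pK pX pY f hf =
      fun x : HoOver.mk K pK ⟶ HoOver.mk X pX =>
        (x ≫ HoOver.homMk ⟨f, hf⟩ : HoOver.mk K pK ⟶ HoOver.mk Y pY) := by
  funext x
  induction x using Quot.ind
  rfl

theorem htpyEquivOver_iff_pi0_bijective {X Y Z : sSp}
    (pX : X ⟶ Z) (pY : Y ⟶ Z) (f : X ⟶ Y) (hf : f ≫ pY = pX) :
    HtpyEquivOver pX pY f hf ↔
      ∀ (K : sSp) (pK : K ⟶ Z),
        Function.Bijective (pi0CompMap pK pX pY f hf) := by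
  simp only [htpyEquivOver_iff_isIso, isIso_iff_yoneda_map_bijective, pi0CompMap_eq_comp]
  exact ⟨fun h K pK => h (HoOver.mk K pK), fun h T => h T.dom T.hom⟩

end KQ
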